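/- Let R > 0, 0 < R' ≤ R, and φ ∈ H¹(B_{2R}) on concentric Euclidean balls in ℝᵈ. Define the mollification (φ)_{R'}(x) := ⨏_{B_{R'}(x)} φ for x ∈ B_R. Then there is a dimensional constant C = C(d) with (1/R²) ⨏_{B_R} |φ − (φ)_{R'}|² ≤ C (R'/R)² ⨏_{B_{2R}} |∇φ|². -/

import Mathlib

/-!
For `‖z‖ < r`, the fundamental theorem of calculus along the segment from `x` to `x + z` and
Jensen's inequality give `|φ (x + z) - φ x|² ≤ r² ∫₀¹ |∇φ (x + t z)|² dt`; a second Jensen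
inequality over `z ∈ B_r` bounds `|φ x - (φ)_r (x)|²` by the average of this. Integrating over
`x ∈ B_R`, Tonelli and translation invariance of Lebesgue measure turn the triple integral into
at most `|B_r| ∫_{B_{R+r}} |∇φ|²`, since every point `x + t z` lies in `B_{R+r} ⊆ B_{2R}`.
Passing to averages costs the volume ratio `|B_{2R}| / |B_R| = 2^d`.
-/

open MeasureTheory Metric Set
open scoped ENNReal

theorem sq_sub_le_lintegral_sq_deriv {g : ℝ → ℝ}
    (hg : ∀ t ∈ Icc (0 : ℝ) 1, DifferentiableAt ℝ g t) :
    ENNReal.ofReal ((g 1 - g 0) ^ 2) ≤ ∫⁻ t in Ioo 0 1, ENNReal.ofReal (deriv g t ^ 2) := by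
  by_cases hfin : ∫⁻ t in Ioo 0 1, ENNReal.ofReal (deriv g t ^ 2) = ∞
  · simp [hfin]
  have : IsProbabilityMeasure (volume.restrict (Ioo (0 : ℝ) 1)) := ⟨by simp⟩
  have hsq : IntegrableOn (fun t => deriv g t ^ 2) (Ioo 0 1) :=
    ⟨((measurable_deriv g).pow_const 2).aestronglyMeasurable,
      (hasFiniteIntegral_iff_ofReal (ae_of_all _ fun _ => sq_nonneg _)).2
        (lt_top_iff_ne_top.2 hfin)⟩
  have hint : IntegrableOn (deriv g) (Ioo 0 1) :=
    ((memLp_two_iff_integrable_sq (measurable_deriv g).aestronglyMeasurable).2 hsq).integrable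
      one_le_two
  have hftc : g 1 - g 0 = ∫ t in Ioo 0 1, deriv g t := by
    rw [← integral_Ioc_eq_integral_Ioo, ← intervalIntegral.integral_of_le zero_le_one,
      intervalIntegral.integral_deriv_eq_sub (by simpa using hg)
        ((intervalIntegrable_iff_integrableOn_Ioo_of_le zero_le_one).2 hint)]
  have hjensen : (∫ t in Ioo 0 1, deriv g t) ^ 2 ≤ ∫ t in Ioo 0 1, deriv g t ^ 2 :=
    even_two.convexOn_pow.map_integral_le (continuous_pow 2).continuousOn isClosed_univ
      (ae_of_all _ fun _ => mem_univ _) hint hsq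
  rw [hftc, ← ofReal_integral_eq_lintegral_ofReal hsq (ae_of_all _ fun _ => sq_nonneg _)]
  exact ENNReal.ofReal_le_ofReal hjensen

section

variable {E : Type*} [NormedAddCommGroup E] [NormedSpace ℝ E]

theorem sq_sub_le_norm_sq_mul_lintegral_fderiv {φ : E → ℝ} (hφ : Differentiable ℝ φ) (x z : E) :
    ENNReal.ofReal ((φ (x + z) - φ x) ^ 2) ≤
      ENNReal.ofReal (‖z‖ ^ 2) *
        ∫⁻ t in Ioo (0 : ℝ) 1, ENNReal.ofReal (‖fderiv ℝ φ (x + t • z)‖ ^ 2) := by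
  set g : ℝ → ℝ := fun t => φ (x + t • z)
  have hderiv (t : ℝ) : HasDerivAt g (fderiv ℝ φ (x + t • z) z) t :=
    (hφ _).hasFDerivAt.comp_hasDerivAt t
      (by simpa using ((hasDerivAt_id t).smul_const z).const_add x)
  calc ENNReal.ofReal ((φ (x + z) - φ x) ^ 2) = ENNReal.ofReal ((g 1 - g 0) ^ 2) := by simp [g]
    _ ≤ ∫⁻ t in Ioo 0 1, ENNReal.ofReal (deriv g t ^ 2) :=
      sq_sub_le_lintegral_sq_deriv fun t _ => (hderiv t).differentiableAt
    _ ≤ ∫⁻ t in Ioo (0 : ℝ) 1,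
          ENNReal.ofReal (‖z‖ ^ 2) * ENNReal.ofReal (‖fderiv ℝ φ (x + t • z)‖ ^ 2) := by
      refine lintegral_mono fun t => ?_
      rw [(hderiv t).deriv, ← ENNReal.ofReal_mul (by positivity), ← mul_pow, ← sq_abs,
        ← Real.norm_eq_abs, mul_comm]
      gcongr
      exact ContinuousLinearMap.le_opNorm _ _
    _ = _ := lintegral_const_mul' _ _ ENNReal.ofReal_ne_top

theorem setLIntegral_ball_comp_add_right {F : Type*} [NormedAddCommGroup F] [MeasurableSpace F]
    [BorelSpace F] (μ : Measure F) [μ.IsAddRightInvariant] (f : F → ℝ≥0∞) (a v : F) (r : ℝ) :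
    ∫⁻ z in ball a r, f (z + v) ∂μ = ∫⁻ y in ball (a + v) r, f y ∂μ := by
  rw [(measurePreserving_add_right μ v).setLIntegral_comp_emb (measurableEmbedding_addRight v)]
  simp

variable [MeasurableSpace E] [BorelSpace E] [FiniteDimensional ℝ E] (μ : Measure E)
  [μ.IsAddHaarMeasure]

theorem setLIntegral_ball_segments_le {f : E → ℝ≥0∞} (hf : Measurable f) (a : E) (R r : ℝ) :
    ∫⁻ x in ball a R, ∫⁻ z in ball (0 : E) r, (∫⁻ t in Ioo (0 : ℝ) 1, f (x + t • z)) ∂μ ∂μ ≤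
      μ (ball (0 : E) r) * ∫⁻ y in ball a (R + r), f y ∂μ := by
  have hmeas : Measurable fun p : (E × E) × ℝ => f (p.1.1 + p.2 • p.1.2) :=
    hf.comp (by fun_prop)
  rw [lintegral_lintegral_swap hmeas.lintegral_prod_right'.aemeasurable]
  calc ∫⁻ z in ball 0 r, ∫⁻ x in ball a R, (∫⁻ t in Ioo (0 : ℝ) 1, f (x + t • z)) ∂μ ∂μ
      ≤ ∫⁻ _ in ball (0 : E) r, ∫⁻ y in ball a (R + r), f y ∂μ ∂μ := by
        refine setLIntegral_mono' measurableSet_ball fun z hz => ?_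
        have hmeas_z : Measurable fun p : E × ℝ => f (p.1 + p.2 • z) := hf.comp (by fun_prop)
        rw [lintegral_lintegral_swap hmeas_z.aemeasurable]
        calc ∫⁻ t in Ioo (0 : ℝ) 1, ∫⁻ x in ball a R, f (x + t • z) ∂μ
            ≤ ∫⁻ _ in Ioo (0 : ℝ) 1, ∫⁻ y in ball a (R + r), f y ∂μ := by
              refine setLIntegral_mono' measurableSet_Ioo fun t ht => ?_
              rw [setLIntegral_ball_comp_add_right]
              refine lintegral_mono_set (ball_subset_ball' ?_)
              have hz : ‖z‖ < r := by simpa using hz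
              rw [dist_self_add_left, norm_smul, Real.norm_of_nonneg ht.1.le]
              nlinarith [norm_nonneg z, ht.2]
          _ = ∫⁻ y in ball a (R + r), f y ∂μ := by simp
    _ = μ (ball 0 r) * ∫⁻ y in ball a (R + r), f y ∂μ := by
        rw [setLIntegral_const, mul_comm]

theorem ofReal_sq_sub_setAverage_ball_le {φ : E → ℝ} (hφ : Continuous φ) (x : E) {r : ℝ}
    (hr : 0 < r) :
    ENNReal.ofReal ((φ x - ⨍ y in ball x r, φ y ∂μ) ^ 2) ≤
      (∫⁻ z in ball (0 : E) r, ENNReal.ofReal ((φ (x + z) - φ x) ^ 2) ∂μ) /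
        μ (ball (0 : E) r) := by
  have hint {ψ : E → ℝ} (hψ : Continuous ψ) : IntegrableOn ψ (ball x r) μ :=
    (hψ.continuousOn.integrableOn_compact (isCompact_closedBall x r)).mono_set
      ball_subset_closedBall
  have hconv : ConvexOn ℝ univ fun t : ℝ => (t - φ x) ^ 2 := by
    simpa [Function.comp_def, neg_add_eq_sub] using even_two.convexOn_pow.translate_right (-φ x)
  have hint_sq : IntegrableOn (fun y => (φ y - φ x) ^ 2) (ball x r) μ := hint (by fun_prop)
  have hjensen : (⨍ y in ball x r, φ y ∂μ - φ x) ^ 2 ≤ ⨍ y in ball x r, (φ y - φ x) ^ 2 ∂μ :=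
    hconv.map_set_average_le (by fun_prop) isClosed_univ (measure_ball_pos μ x hr).ne'
      measure_ball_lt_top.ne (ae_of_all _ fun _ => mem_univ _) (hint hφ) hint_sq
  have htranslate := setLIntegral_ball_comp_add_right μ
    (fun y => ENNReal.ofReal ((φ y - φ x) ^ 2)) 0 x r
  rw [zero_add] at htranslate
  simp_rw [add_comm x, htranslate, ← Measure.addHaar_ball_center μ x]
  rw [← ofReal_setAverage hint_sq (ae_of_all _ fun _ => sq_nonneg _), ← neg_sub, neg_sq]
  exact ENNReal.ofReal_le_ofReal hjensen

theorem setLIntegral_sq_sub_setAverage_ball_le {φ : E → ℝ} (hφ : Differentiable ℝ φ) (a : E)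
    (R : ℝ) {r : ℝ} (hr : 0 < r) :
    ∫⁻ x in ball a R, ENNReal.ofReal ((φ x - ⨍ y in ball x r, φ y ∂μ) ^ 2) ∂μ ≤
      ENNReal.ofReal (r ^ 2) * ∫⁻ y in ball a (R + r), ENNReal.ofReal (‖fderiv ℝ φ y‖ ^ 2) ∂μ := by
  set f : E → ℝ≥0∞ := fun y => ENNReal.ofReal (‖fderiv ℝ φ y‖ ^ 2)
  have hf : Measurable f := ((measurable_fderiv ℝ φ).norm.pow_const 2).ennreal_ofReal
  set V := μ (ball (0 : E) r)
  have hV : V ≠ 0 := (measure_ball_pos μ 0 hr).ne'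
  have hpointwise (x : E) : ENNReal.ofReal ((φ x - ⨍ y in ball x r, φ y ∂μ) ^ 2) ≤
      ENNReal.ofReal (r ^ 2) / V *
        ∫⁻ z in ball (0 : E) r, (∫⁻ t in Ioo (0 : ℝ) 1, f (x + t • z)) ∂μ := by
    calc _ ≤ (∫⁻ z in ball (0 : E) r, ENNReal.ofReal ((φ (x + z) - φ x) ^ 2) ∂μ) / V :=
          ofReal_sq_sub_setAverage_ball_le μ hφ.continuous x hr
      _ ≤ (∫⁻ z in ball (0 : E) r,
            ENNReal.ofReal (r ^ 2) * (∫⁻ t in Ioo (0 : ℝ) 1, f (x + t • z)) ∂μ) / V := by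
          refine ENNReal.div_le_div_right (setLIntegral_mono' measurableSet_ball fun z hz =>
            (sq_sub_le_norm_sq_mul_lintegral_fderiv hφ x z).trans ?_) _
          have hz : ‖z‖ < r := by simpa using hz
          gcongr
      _ = _ := by rw [lintegral_const_mul' _ _ ENNReal.ofReal_ne_top, ENNReal.mul_div_right_comm]
  calc _ ≤ ∫⁻ x in ball a R, ENNReal.ofReal (r ^ 2) / V *
          ∫⁻ z in ball (0 : E) r, (∫⁻ t in Ioo (0 : ℝ) 1, f (x + t • z)) ∂μ ∂μ :=
        lintegral_mono hpointwise
    _ = ENNReal.ofReal (r ^ 2) / V * ∫⁻ x in ball a R,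
          ∫⁻ z in ball (0 : E) r, (∫⁻ t in Ioo (0 : ℝ) 1, f (x + t • z)) ∂μ ∂μ :=
        lintegral_const_mul' _ _ (ENNReal.div_ne_top ENNReal.ofReal_ne_top hV)
    _ ≤ ENNReal.ofReal (r ^ 2) / V * (V * ∫⁻ y in ball a (R + r), f y ∂μ) := by
        gcongr
        exact setLIntegral_ball_segments_le μ hf a R r
    _ = ENNReal.ofReal (r ^ 2) * ∫⁻ y in ball a (R + r), f y ∂μ := by
        rw [← mul_assoc, ENNReal.div_mul_cancel hV measure_ball_lt_top.ne]

theorem addHaar_real_ball_mul_of_pos (a : E) {c : ℝ} (hc : 0 < c) (R : ℝ) :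
    μ.real (ball a (c * R)) = c ^ Module.finrank ℝ E * μ.real (ball a R) := by
  rw [measureReal_def, measureReal_def, Measure.addHaar_ball_mul_of_pos μ a hc,
    ← Measure.addHaar_ball_center μ a, ENNReal.toReal_mul, ENNReal.toReal_ofReal (by positivity)]

end

theorem integral_le_mul_integral_of_lintegral_le {α : Type*} [MeasurableSpace α]
    {μ ν : Measure α} {f g : α → ℝ} {c : ℝ} (hf : 0 ≤ᵐ[μ] f) (hg : Integrable g ν)
    (hg₀ : 0 ≤ᵐ[ν] g) (hc : 0 ≤ c)
    (h : ∫⁻ x, ENNReal.ofReal (f x) ∂μ ≤ ENNReal.ofReal c * ∫⁻ x, ENNReal.ofReal (g x) ∂ν) :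
    ∫ x, f x ∂μ ≤ c * ∫ x, g x ∂ν := by
  have hcg : 0 ≤ c * ∫ x, g x ∂ν := mul_nonneg hc (integral_nonneg_of_ae hg₀)
  by_cases hfi : Integrable f μ
  · rwa [← ENNReal.ofReal_le_ofReal_iff hcg, ENNReal.ofReal_mul hc,
      ofReal_integral_eq_lintegral_ofReal hfi hf, ofReal_integral_eq_lintegral_ofReal hg hg₀]
  · rwa [integral_undef hfi]

theorem norm_gradient {F : Type*} [NormedAddCommGroup F] [InnerProductSpace ℝ F]
    [CompleteSpace F] (φ : F → ℝ) (x : F) : ‖gradient φ x‖ = ‖fderiv ℝ φ x‖ :=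
  (InnerProductSpace.toDual ℝ F).symm.norm_map _

theorem stmt18_general (d : ℕ) :
    ∃ C : ℝ, 0 < C ∧
      ∀ (R R' : ℝ) (φ : EuclideanSpace ℝ (Fin d) → ℝ),
        0 < R' → R' ≤ R → Differentiable ℝ φ →
        IntegrableOn (fun x => ‖gradient φ x‖ ^ 2)
          (Metric.ball (0 : EuclideanSpace ℝ (Fin d)) (2 * R)) →
        (1 / R ^ 2) * (⨍ x in Metric.ball (0 : EuclideanSpace ℝ (Fin d)) R,
            (φ x - ⨍ y in Metric.ball x R', φ y) ^ 2) ≤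
          C * (R' / R) ^ 2 *
            ⨍ x in Metric.ball (0 : EuclideanSpace ℝ (Fin d)) (2 * R), ‖gradient φ x‖ ^ 2 := by
  refine ⟨2 ^ d, by positivity, fun R R' φ hR' hR'R hφ hint => ?_⟩
  have hR : 0 < R := hR'.trans_le hR'R
  have hlintegral := (setLIntegral_sq_sub_setAverage_ball_le volume hφ 0 R hR').trans
    (mul_le_mul_right (lintegral_mono_set (ball_subset_ball (by linarith : R + R' ≤ 2 * R))) _)
  simp_rw [← norm_gradient] at hlintegral
  have hintegral := integral_le_mul_integral_of_lintegral_le (ae_of_all _ fun _ => sq_nonneg _)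
    hint (ae_of_all _ fun _ => sq_nonneg _) (sq_nonneg R') hlintegral
  have hvol : volume.real (ball (0 : EuclideanSpace ℝ (Fin d)) (2 * R)) =
      2 ^ d * volume.real (ball (0 : EuclideanSpace ℝ (Fin d)) R) := by
    rw [addHaar_real_ball_mul_of_pos volume 0 two_pos, finrank_euclideanSpace_fin]
  have hV : 0 < volume.real (ball (0 : EuclideanSpace ℝ (Fin d)) R) :=
    ENNReal.toReal_pos (measure_ball_pos _ _ hR).ne' measure_ball_lt_top.ne
  rw [setAverage_eq, setAverage_eq, smul_eq_mul, smul_eq_mul, hvol]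
  calc _ ≤ 1 / R ^ 2 * ((volume.real (ball (0 : EuclideanSpace ℝ (Fin d)) R))⁻¹ *
        (R' ^ 2 * ∫ x in ball 0 (2 * R), ‖gradient φ x‖ ^ 2)) := by gcongr
    _ = _ := by field_simp

/-- Poincaré-type mollification estimate: with `(φ)_{R'}(x) = ⨍_{B_{R'}(x)} φ`,
`(1/R²) ⨍_{B_R} |φ − (φ)_{R'}|² ≤ C(d) (R'/R)² ⨍_{B_{2R}} |∇φ|²`. -/
theorem stmt18 (d : ℕ) (hd : 0 < d) :
    ∃ C : ℝ, 0 < C ∧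
      ∀ (R R' : ℝ) (φ : EuclideanSpace ℝ (Fin d) → ℝ),
        0 < R' → R' ≤ R → Differentiable ℝ φ →
        IntegrableOn (fun x => ‖gradient φ x‖ ^ 2)
          (Metric.ball (0 : EuclideanSpace ℝ (Fin d)) (2 * R)) →
        (1 / R ^ 2) * (⨍ x in Metric.ball (0 : EuclideanSpace ℝ (Fin d)) R,
            (φ x - ⨍ y in Metric.ball x R', φ y) ^ 2) ≤
          C * (R' / R) ^ 2 *
            ⨍ x in Metric.ball (0 : EuclideanSpace ℝ (Fin d)) (2 * R), ‖gradient φ x‖ ^ 2 :=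
  stmt18_general d
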